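/- Let τ ∈ (0,1), let K : ℝ → ℝ be a continuous nonnegative kernel with ∫_{-∞}^{∞} K(t) dt = 1 and ζ₁ = ∫_{-∞}^{∞} |t| K(t) dt < ∞, and let h > 0. Then the convolution-smoothed quantile loss ℓ_h(r) = (1/h) ∫_{-∞}^{∞} ρ_τ(t) K((t − r)/h) dt is twice differentiable on ℝ with second derivative ℓ_h″(r) = (1/h) K(−r/h) ≥ 0 for every r ∈ ℝ; in particular ℓ_h is a convex function on ℝ. -/

import Mathlib

open MeasureTheory

/-- The quantile loss `ρ_τ(t) = t (τ - 1{t<0})`. -/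
noncomputable def rho (τ t : ℝ) : ℝ := t * (τ - if t < 0 then 1 else 0)

/-- The convolution-smoothed quantile loss
`ℓ_h(r) = (1/h) ∫ ρ_τ(t) K((t - r)/h) dt`. -/
noncomputable def smoothedLoss (τ : ℝ) (K : ℝ → ℝ) (h r : ℝ) : ℝ :=
  (1 / h) * ∫ t, rho τ t * K ((t - r) / h)

lemma rho_eq (τ t : ℝ) : rho τ t = τ * t + max (-t) 0 := by
  unfold rho
  rcases lt_or_ge t 0 with h | h
  · rw [if_pos h, max_eq_left (by linarith)]; ring
  · rw [if_neg (not_lt.mpr h), max_eq_right (by linarith)]; ring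

lemma rho_cont (τ : ℝ) : Continuous (rho τ) := by
  have : rho τ = fun t => τ * t + max (-t) 0 := funext (rho_eq τ)
  rw [this]; fun_prop

lemma rho_lip (τ : ℝ) (hτ1 : τ ≤ 1) (hτ0 : 0 ≤ τ) (a b : ℝ) :
    |rho τ a - rho τ b| ≤ 2 * |a - b| := by
  rw [rho_eq, rho_eq]
  have h1 : |max (-a) 0 - max (-b) 0| ≤ |(-a) - (-b)| := abs_max_sub_max_le_abs _ _ _
  have h2 : |(-a) - (-b)| = |a - b| := by rw [← abs_neg]; ring_nf
  calc |τ * a + max (-a) 0 - (τ * b + max (-b) 0)|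
      ≤ |τ * a - τ * b| + |max (-a) 0 - max (-b) 0| := by
        have := abs_add_le (τ * a - τ * b) (max (-a) 0 - max (-b) 0)
        have e : τ * a + max (-a) 0 - (τ * b + max (-b) 0) = τ * a - τ * b + (max (-a) 0 - max (-b) 0) := by ring
        rw [e]; exact this
    _ ≤ τ * |a - b| + |a - b| := by
        apply add_le_add
        · rw [← mul_sub, abs_mul, abs_of_nonneg hτ0]
        · rw [h2] at h1; exact h1
    _ ≤ 2 * |a - b| := by nlinarith [abs_nonneg (a - b)]

lemma rho_abs_le (τ : ℝ) (hτ1 : τ ≤ 1) (hτ0 : 0 ≤ τ) (t : ℝ) : |rho τ t| ≤ |t| := by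
  unfold rho
  rw [abs_mul]
  have : |τ - if t < 0 then 1 else 0| ≤ 1 := by
    split_ifs <;> rw [abs_le] <;> constructor <;> linarith
  calc |t| * |τ - if t < 0 then 1 else 0| ≤ |t| * 1 := by gcongr
    _ = |t| := mul_one _

-- derivative of rho composed, away from kink
lemma rho_hasDeriv (τ h u r₀ : ℝ) (Ku : ℝ) (hu : r₀ + h * u ≠ 0) :
    HasDerivAt (fun r => rho τ (r + h * u) * Ku)
      ((τ - if r₀ + h * u < 0 then 1 else 0) * Ku) r₀ := by
  rcases lt_or_gt_of_ne hu with hneg | hpos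
  · rw [if_pos hneg]
    have ht : Filter.Tendsto (fun r : ℝ => r + h * u) (nhds r₀) (nhds (r₀ + h * u)) :=
      (continuous_id.add continuous_const).tendsto r₀
    have hev : (fun r : ℝ => (r + h * u) * (τ - 1) * Ku) =ᶠ[nhds r₀]
        (fun r => rho τ (r + h * u) * Ku) := by
      filter_upwards [ht.eventually (eventually_lt_nhds hneg)] with r hr
      unfold rho; rw [if_pos hr]
    have hder : HasDerivAt (fun r : ℝ => (r + h * u) * (τ - 1) * Ku) ((τ - 1) * Ku) r₀ := by
      have := (((hasDerivAt_id r₀).add_const (h * u)).mul_const (τ - 1)).mul_const Ku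
      simpa using this
    exact hder.congr_of_eventuallyEq hev.symm
  · rw [if_neg (by linarith : ¬ r₀ + h * u < 0)]
    have ht : Filter.Tendsto (fun r : ℝ => r + h * u) (nhds r₀) (nhds (r₀ + h * u)) :=
      (continuous_id.add continuous_const).tendsto r₀
    have hev : (fun r : ℝ => (r + h * u) * τ * Ku) =ᶠ[nhds r₀]
        (fun r => rho τ (r + h * u) * Ku) := by
      filter_upwards [ht.eventually (eventually_gt_nhds hpos)] with r hr
      unfold rho; rw [if_neg (not_lt.mpr hr.le)]; ring_nf
    have hder : HasDerivAt (fun r : ℝ => (r + h * u) * τ * Ku) (τ * Ku) r₀ := by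
      have := (((hasDerivAt_id r₀).add_const (h * u)).mul_const τ).mul_const Ku
      simpa using this
    have := hder.congr_of_eventuallyEq hev.symm
    simpa using this

/-- for `τ ∈ (0,1)`, a continuous nonnegative kernel `K` with
`∫ K = 1` and finite first moment, and `h > 0`, the convolution-smoothed
quantile loss `ℓ_h` is twice differentiable on `ℝ`, with second derivative
`ℓ_h''(r) = (1/h) K(-r/h) ≥ 0`; in particular `ℓ_h` is convex on `ℝ`. -/
theorem stmt1 (τ : ℝ) (hτ : τ ∈ Set.Ioo (0 : ℝ) 1)
    (K : ℝ → ℝ) (hKcont : Continuous K) (hKnonneg : ∀ t, 0 ≤ K t)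
    (hKint : ∫ t, K t = 1)
    (hζ1 : Integrable (fun t => |t| * K t))
    (h : ℝ) (hh : 0 < h) :
    (∀ r : ℝ, DifferentiableAt ℝ (smoothedLoss τ K h) r) ∧
      (∀ r : ℝ, HasDerivAt (deriv (smoothedLoss τ K h)) ((1 / h) * K (-r / h)) r) ∧
      (∀ r : ℝ, 0 ≤ (1 / h) * K (-r / h)) ∧
      ConvexOn ℝ Set.univ (smoothedLoss τ K h) := by
  obtain ⟨hτ0, hτ1⟩ := hτ
  have h0 : h ≠ 0 := ne_of_gt hh
  -- K is integrable
  have hKI : Integrable K := by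
    by_contra hc
    rw [integral_undef hc] at hKint
    exact one_ne_zero hKint.symm
  -- Substitution: smoothedLoss equals ∫ rho τ (r + h u) K u du
  have hsub : ∀ r : ℝ, smoothedLoss τ K h r = ∫ u, rho τ (r + h * u) * K u := by
    intro r
    set g : ℝ → ℝ := fun u => rho τ (r + h * u) * K u with hg
    have e1 : (fun t : ℝ => rho τ t * K ((t - r) / h)) = fun t => g ((t - r) / h) := by
      funext t
      have : r + h * ((t - r) / h) = t := by field_simp; ring
      simp only [hg, this]
    have e2 : (fun t : ℝ => g ((t - r) / h)) = fun t => (fun s => g (s / h)) (t - r) := rfl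
    unfold smoothedLoss
    rw [e1, e2, integral_sub_right_eq_self (fun s => g (s / h)) r,
      Measure.integral_comp_div g h, abs_of_pos hh, smul_eq_mul]
    field_simp
  -- Integrability of the integrand for each r
  have hFint : ∀ r : ℝ, Integrable (fun u => rho τ (r + h * u) * K u) := by
    intro r
    apply Integrable.mono ((hKI.const_mul |r|).add (hζ1.const_mul h))
    · exact (((rho_cont τ).comp (continuous_const.add
        (continuous_const.mul continuous_id))).mul hKcont).aestronglyMeasurable
    · refine Filter.Eventually.of_forall fun u => ?_
      have hb : |rho τ (r + h * u)| ≤ |r| + h * |u| := by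
        calc |rho τ (r + h * u)| ≤ |r + h * u| := rho_abs_le τ hτ1.le hτ0.le _
          _ ≤ |r| + |h * u| := abs_add_le _ _
          _ = |r| + h * |u| := by rw [abs_mul, abs_of_pos hh]
      have hnn : 0 ≤ |r| * K u + h * (|u| * K u) := by
        have := hKnonneg u
        positivity
      simp only [Pi.add_apply]
      rw [Real.norm_eq_abs, Real.norm_eq_abs, abs_of_nonneg hnn, abs_mul,
        abs_of_nonneg (hKnonneg u)]
      calc |rho τ (r + h * u)| * K u ≤ (|r| + h * |u|) * K u :=
            mul_le_mul_of_nonneg_right hb (hKnonneg u)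
        _ = |r| * K u + h * (|u| * K u) := by ring
  -- the first-derivative candidate
  set G : ℝ → ℝ := fun r => τ - ∫ u in Set.Iio (-r / h), K u with hGdef
  -- derivative via dominated convergence
  have hD : ∀ r₀ : ℝ, HasDerivAt (fun r => ∫ u, rho τ (r + h * u) * K u) (G r₀) r₀ := by
    intro r₀
    have hae : ∀ᵐ u : ℝ, r₀ + h * u ≠ 0 := by
      rw [ae_iff]
      refine measure_mono_null (fun u hu => ?_) (measure_singleton (-r₀ / h))
      simp only [Set.mem_setOf_eq, not_not] at hu
      have : u = -r₀ / h := by field_simp; linarith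
      simpa [Set.mem_singleton_iff] using this
    have hcond : ∀ u : ℝ, (r₀ + h * u < 0) ↔ u < -r₀ / h := by
      intro u
      rw [lt_div_iff₀ hh]
      constructor <;> intro hx <;> nlinarith [mul_comm u h]
    have hF'meas : AEStronglyMeasurable
        (fun u : ℝ => (τ - if r₀ + h * u < 0 then 1 else 0) * K u) volume := by
      refine Measurable.aestronglyMeasurable ?_
      refine ((measurable_const.sub (Measurable.ite ?_ measurable_const
        measurable_const)).mul hKcont.measurable)
      exact (isOpen_lt (continuous_const.add (continuous_const.mul continuous_id))
        continuous_const).measurableSet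
    have hlip : ∀ᵐ u : ℝ, LipschitzOnWith (Real.nnabs (2 * K u))
        (fun r => rho τ (r + h * u) * K u) (Metric.ball r₀ 1) := by
      refine Filter.Eventually.of_forall fun u => ?_
      refine LipschitzOnWith.of_dist_le_mul fun x _ y _ => ?_
      rw [Real.dist_eq, Real.dist_eq, Real.coe_nnabs,
        abs_of_nonneg (by have := hKnonneg u; positivity : (0:ℝ) ≤ 2 * K u)]
      calc |rho τ (x + h * u) * K u - rho τ (y + h * u) * K u|
          = |rho τ (x + h * u) - rho τ (y + h * u)| * K u := by
            rw [← sub_mul, abs_mul, abs_of_nonneg (hKnonneg u)]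
        _ ≤ 2 * |(x + h * u) - (y + h * u)| * K u :=
            mul_le_mul_of_nonneg_right (rho_lip τ hτ1.le hτ0.le _ _) (hKnonneg u)
        _ = 2 * K u * |x - y| := by ring_nf
    have hdiff : ∀ᵐ u : ℝ, HasDerivAt (fun r => rho τ (r + h * u) * K u)
        ((τ - if r₀ + h * u < 0 then 1 else 0) * K u) r₀ := by
      filter_upwards [hae] with u hu
      exact rho_hasDeriv τ h u r₀ (K u) hu
    have main := hasDerivAt_integral_of_dominated_loc_of_lip
      (F := fun r u => rho τ (r + h * u) * K u)
      (F' := fun u => (τ - if r₀ + h * u < 0 then 1 else 0) * K u)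
      (bound := fun u => 2 * K u) (Metric.ball_mem_nhds r₀ one_pos)
      (Filter.Eventually.of_forall fun r => (hFint r).aestronglyMeasurable)
      (hFint r₀) hF'meas hlip (hKI.const_mul 2) hdiff
    have hval : (∫ u, (τ - if r₀ + h * u < 0 then 1 else 0) * K u) = G r₀ := by
      have hcomp : (fun u : ℝ => (τ - if r₀ + h * u < 0 then 1 else 0) * K u)
          = fun u => τ * K u - Set.indicator (Set.Iio (-r₀ / h)) K u := by
        funext u
        rw [Set.indicator_apply]
        simp only [Set.mem_Iio, ← hcond u]
        split_ifs <;> ring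
      rw [hcomp, integral_sub (hKI.const_mul τ) (hKI.indicator measurableSet_Iio),
        integral_const_mul, hKint, integral_indicator measurableSet_Iio, hGdef]
      ring
    rw [← hval]
    exact main.2
  -- derivative of G
  have hΦ : ∀ x : ℝ, HasDerivAt (fun y => ∫ u in Set.Iio y, K u) (K x) x := by
    intro x
    have heq : (fun y : ℝ => ∫ u in Set.Iio y, K u)
        = fun y => (∫ u in Set.Iic (0:ℝ), K u) + ∫ u in (0:ℝ)..y, K u := by
      funext y
      rw [setIntegral_congr_set Iio_ae_eq_Iic,
        ← intervalIntegral.integral_Iic_sub_Iic hKI.integrableOn hKI.integrableOn]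
      ring
    rw [heq]
    exact (intervalIntegral.integral_hasDerivAt_right hKI.intervalIntegrable
      (hKcont.stronglyMeasurableAtFilter _ _) hKcont.continuousAt).const_add _
  have hG : ∀ r : ℝ, HasDerivAt G ((1 / h) * K (-r / h)) r := by
    intro r
    have hinner : HasDerivAt (fun r : ℝ => -r / h) (-1 / h) r := by
      simpa using ((hasDerivAt_id r).neg.div_const h)
    have hcomp := (hΦ (-r / h)).comp r hinner
    have := hcomp.const_sub τ
    have e : (1 / h) * K (-r / h) = -(K (-r / h) * (-1 / h)) := by ring
    rw [e]; exact this
  -- assemble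
  have hsmeq : smoothedLoss τ K h = fun r => ∫ u, rho τ (r + h * u) * K u :=
    funext hsub
  have hDsm : ∀ r : ℝ, HasDerivAt (smoothedLoss τ K h) (G r) r := by
    intro r; rw [hsmeq]; exact hD r
  have hderiv_eq : deriv (smoothedLoss τ K h) = G := funext fun r => (hDsm r).deriv
  have hpos : ∀ r : ℝ, 0 ≤ (1 / h) * K (-r / h) := fun r =>
    mul_nonneg (by positivity) (hKnonneg _)
  refine ⟨fun r => (hDsm r).differentiableAt, fun r => ?_, hpos, ?_⟩
  · rw [hderiv_eq]; exact hG r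
  · refine convexOn_of_hasDerivWithinAt2_nonneg convex_univ
      (f' := G) (f'' := fun r => (1 / h) * K (-r / h))
      (fun r _ => (hDsm r).continuousAt.continuousWithinAt)
      (fun r _ => (hDsm r).hasDerivWithinAt)
      (fun r _ => (hG r).hasDerivWithinAt)
      (fun r _ => hpos r)
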